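/- The vector space of all harmonic functions $u : \mathbb{D} \to \mathbb{R}$ such that $u(z) \to 0$ along every nontangential path to $\zeta$, for all $\zeta \in \partial\mathbb{D}$ outside a set of logarithmic capacity zero, is infinite-dimensional. -/

import Mathlib

/- For `‖ζ‖ = 1` the Poisson kernel `P_ζ w = (1 - ‖w‖²) / ‖ζ - w‖² = Re ((ζ + w) / (ζ - w))` is
harmonic in the disk and continuous up to the circle away from `ζ`, where it vanishes; so it has
nontangential limit `0` off the single point `ζ`, a set of capacity zero. Kernels at distinct
points are linearly independent: along the radius to `ζ`, `P_ζ (t ζ) = (1 + t) / (1 - t) ≥ 1`,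
while the other kernels tend to `0`. -/

/-- `V_n(E)` for `E ⊆ ℂ`: supremum of products of pairwise distances over
`n`-point collections in `E`. -/
noncomputable def VnC (E : Set ℂ) (n : ℕ) : ℝ :=
  sSup {v : ℝ | ∃ z : Fin n → ℂ, (∀ i, z i ∈ E) ∧
    v = ∏ p ∈ Finset.univ.filter (fun p : Fin n × Fin n => p.1 < p.2), dist (z p.1) (z p.2)}

/-- The logarithmic capacity (transfinite diameter) of `E ⊆ ℂ`: the limit
(= infimum, the sequence being nonincreasing) of `V_n^{2/(n(n-1))}`. -/
noncomputable def capC (E : Set ℂ) : ℝ :=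
  ⨅ n : ℕ, VnC E (n + 2) ^ ((2 : ℝ) / (((n : ℝ) + 2) * ((n : ℝ) + 1)))

/-- A `C²` function `u` is harmonic on `s ⊆ ℂ` if its Laplacian (the sum of the
two pure second partial derivatives) vanishes on `s`. -/
def IsHarmonicOn (u : ℂ → ℝ) (s : Set ℂ) : Prop :=
  ContDiffOn ℝ 2 u s ∧ ∀ z ∈ s,
    deriv (fun x : ℝ => deriv (fun x' : ℝ => u (↑x' + ↑z.im * Complex.I)) x) z.re +
    deriv (fun y : ℝ => deriv (fun y' : ℝ => u (↑z.re + ↑y' * Complex.I)) y) z.im = 0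

/-- The Stolz region at `ζ ∈ ∂𝔻` with aperture parameter `M`; nontangential
paths to `ζ` are exactly paths eventually lying in some such region. -/
def stolzAt (ζ : ℂ) (M : ℝ) : Set ℂ :=
  {z : ℂ | ‖z‖ < 1 ∧ ‖z - ζ‖ ≤ M * (1 - ‖z‖)}

open Complex Filter Topology

lemma VnC_singleton (ζ : ℂ) {n : ℕ} (hn : 2 ≤ n) : VnC {ζ} n = 0 := by
  have h_prod : ∀ z : Fin n → ℂ, (∀ i, z i ∈ ({ζ} : Set ℂ)) →
      ∏ p ∈ Finset.univ.filter (fun p : Fin n × Fin n => p.1 < p.2), dist (z p.1) (z p.2) = 0 := by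
    intro z hz
    refine Finset.prod_eq_zero (i := (⟨0, by omega⟩, ⟨1, by omega⟩)) (by simp) ?_
    simp [show z ⟨0, _⟩ = ζ from hz _, show z ⟨1, _⟩ = ζ from hz _]
  have h_set : {v : ℝ | ∃ z : Fin n → ℂ, (∀ i, z i ∈ ({ζ} : Set ℂ)) ∧
      v = ∏ p ∈ Finset.univ.filter (fun p : Fin n × Fin n => p.1 < p.2),
        dist (z p.1) (z p.2)} = {0} := by
    ext v
    constructor
    · rintro ⟨z, hz, rfl⟩
      exact h_prod z hz
    · rintro rfl
      exact ⟨fun _ => ζ, fun _ => rfl, (h_prod _ fun _ => rfl).symm⟩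
  rw [VnC, h_set, csSup_singleton]

lemma capC_singleton (ζ : ℂ) : capC {ζ} = 0 := by
  have h : ∀ n : ℕ, VnC {ζ} (n + 2) ^ ((2 : ℝ) / (((n : ℝ) + 2) * ((n : ℝ) + 1))) = 0 :=
    fun n => by rw [VnC_singleton ζ (by omega), Real.zero_rpow (by positivity)]
  simp only [capC, h, ciInf_const]

lemma IsHarmonicOn.mono {u : ℂ → ℝ} {s t : Set ℂ} (hu : IsHarmonicOn u s) (hts : t ⊆ s) :
    IsHarmonicOn u t :=
  ⟨hu.1.mono hts, fun z hz => hu.2 z (hts hz)⟩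

section HolomorphicRealPart

variable {G : ℂ → ℂ} {G' : ℂ} {s : Set ℂ}

lemma HasDerivAt.re_comp_horizontal {x b : ℝ} (h : HasDerivAt G G' (x + b * I)) :
    HasDerivAt (fun x' : ℝ => (G (x' + b * I)).re) G'.re x :=
  (h.comp_add_const (x : ℂ) (b * I)).real_of_complex

lemma HasDerivAt.re_comp_vertical {a y : ℝ} (h : HasDerivAt G G' (a + y * I)) :
    HasDerivAt (fun y' : ℝ => (G (a + y' * I)).re) (G' * I).re y :=
  (h.comp (y : ℂ) ((hasDerivAt_mul_const I).const_add (a : ℂ))).real_of_complex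

lemma deriv_re_comp_horizontal_eventuallyEq (hs : IsOpen s) (hG : DifferentiableOn ℂ G s)
    {z : ℂ} (hz : z ∈ s) :
    (fun x : ℝ => deriv (fun x' : ℝ => (G (x' + z.im * I)).re) x)
      =ᶠ[𝓝 z.re] fun x => (deriv G (x + z.im * I)).re := by
  have h_line : ContinuousAt (fun x : ℝ => (x : ℂ) + z.im * I) z.re := by fun_prop
  have h_near : ∀ᶠ x : ℝ in 𝓝 z.re, (x : ℂ) + z.im * I ∈ s :=
    h_line.preimage_mem_nhds (hs.mem_nhds (by rwa [re_add_im]))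
  filter_upwards [h_near] with x hx
  exact (hG.differentiableAt (hs.mem_nhds hx)).hasDerivAt.re_comp_horizontal.deriv

lemma deriv_re_comp_vertical_eventuallyEq (hs : IsOpen s) (hG : DifferentiableOn ℂ G s)
    {z : ℂ} (hz : z ∈ s) :
    (fun y : ℝ => deriv (fun y' : ℝ => (G (z.re + y' * I)).re) y)
      =ᶠ[𝓝 z.im] fun y => (deriv G (z.re + y * I) * I).re := by
  have h_line : ContinuousAt (fun y : ℝ => (z.re : ℂ) + y * I) z.im := by fun_prop
  have h_near : ∀ᶠ y : ℝ in 𝓝 z.im, (z.re : ℂ) + y * I ∈ s :=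
    h_line.preimage_mem_nhds (hs.mem_nhds (by rwa [re_add_im]))
  filter_upwards [h_near] with y hy
  exact (hG.differentiableAt (hs.mem_nhds hy)).hasDerivAt.re_comp_vertical.deriv

/-- The horizontal second derivative of `Re G` is `Re G''` and the vertical one is
`Re (G'' * I * I) = - Re G''`. -/
theorem isHarmonicOn_re_of_differentiableOn (hs : IsOpen s) (hG : DifferentiableOn ℂ G s) :
    IsHarmonicOn (fun z => (G z).re) s := by
  refine ⟨reCLM.contDiff.comp_contDiffOn ((hG.contDiffOn hs).restrict_scalars ℝ), fun z hz => ?_⟩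
  have hG'' : HasDerivAt (deriv G) (deriv (deriv G) z) (z.re + z.im * I) := by
    rw [re_add_im]
    exact ((hG.analyticOnNhd hs).deriv z hz).differentiableAt.hasDerivAt
  rw [(deriv_re_comp_horizontal_eventuallyEq hs hG hz).deriv_eq,
    (deriv_re_comp_vertical_eventuallyEq hs hG hz).deriv_eq,
    hG''.re_comp_horizontal.deriv, (hG''.mul_const I).re_comp_vertical.deriv]
  simp

end HolomorphicRealPart

theorem linearIndependent_of_tendsto_zero {ι X 𝕜 M : Type*} [Field 𝕜] [AddCommGroup M]
    [Module 𝕜 M] [TopologicalSpace M] [IsTopologicalAddGroup M] [ContinuousConstSMul 𝕜 M]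
    {f : ι → X → M} (l : ι → Filter X) (h_off : ∀ i j, j ≠ i → Tendsto (f j) (l i) (𝓝 0))
    (h_diag : ∀ i, ¬Tendsto (f i) (l i) (𝓝 0)) : LinearIndependent 𝕜 f := by
  classical
  rw [linearIndependent_iff']
  intro s c h_sum i hi
  by_contra hci
  have h_rest : Tendsto (fun x => -∑ j ∈ s.erase i, c j • f j x) (l i) (𝓝 0) := by
    simpa using (tendsto_finsetSum _ fun j hj =>
      (h_off i j (Finset.ne_of_mem_erase hj)).const_smul (c j)).neg
  have h_eq : c i • f i = -∑ j ∈ s.erase i, c j • f j := by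
    rw [← Finset.add_sum_erase s _ hi] at h_sum
    exact eq_neg_of_add_eq_zero_left h_sum
  have h_ci : Tendsto (c i • f i) (l i) (𝓝 0) := by
    refine h_rest.congr fun x => ?_
    simpa [Finset.sum_apply] using (congrFun h_eq x).symm
  exact h_diag i (by simpa [smul_smul, inv_mul_cancel₀ hci] using h_ci.const_smul (c i)⁻¹)

lemma poissonKernel_eq_zero_of_norm_eq {c w z : ℂ} (h : ‖w - c‖ = ‖z - c‖) :
    poissonKernel c w z = 0 := by
  simp [poissonKernel_def, h]

lemma isHarmonicOn_poissonKernel (c z : ℂ) : IsHarmonicOn (fun w => poissonKernel c w z) {z}ᶜ := by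
  simp_rw [poissonKernel_eq_re_herglotzRieszKernel, Function.comp_apply, herglotzRieszKernel_def]
  refine isHarmonicOn_re_of_differentiableOn isOpen_compl_singleton fun w hw => ?_
  have h_den : z - c - (w - c) ≠ 0 := by simpa [sub_eq_zero] using Ne.symm hw
  exact (by fun_prop (disch := exact h_den) :
    DifferentiableAt ℂ (fun w => (z - c + (w - c)) / (z - c - (w - c))) w).differentiableWithinAt

lemma tendsto_poissonKernel_of_norm_eq {c w z : ℂ} (h : ‖w - c‖ = ‖z - c‖) (hne : w ≠ z) :
    Tendsto (fun w' => poissonKernel c w' z) (𝓝 w) (𝓝 0) := by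
  have h_den : ‖z - c - (w - c)‖ ^ 2 ≠ 0 := by simpa [sub_eq_zero] using Ne.symm hne
  have h_cont : ContinuousAt (fun w' => poissonKernel c w' z) w := by
    simp_rw [poissonKernel_def]
    exact ContinuousAt.div (by fun_prop) (by fun_prop) h_den
  simpa [poissonKernel_eq_zero_of_norm_eq h] using h_cont.tendsto

lemma poissonKernel_ofReal_mul_self {z : ℂ} (hz : z ≠ 0) (t : ℝ) :
    poissonKernel 0 (t * z) z = (1 + t) / (1 - t) := by
  rw [poissonKernel_eq_re_herglotzRieszKernel, Function.comp_apply, herglotzRieszKernel_def]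
  simp only [sub_zero]
  rw [show z + t * z = z * (1 + t) by ring, show z - t * z = z * (1 - t) by ring,
    mul_div_mul_left _ _ hz]
  exact_mod_cast ofReal_re _

lemma not_tendsto_poissonKernel_radial {z : ℂ} (hz : z ≠ 0) :
    ¬Tendsto (fun w => poissonKernel 0 w z) (map (fun t : ℝ => (t : ℂ) * z) (𝓝[<] 1)) (𝓝 0) := by
  intro h
  have h_ge : ∀ᶠ t : ℝ in 𝓝[<] 1, 1 ≤ poissonKernel 0 (t * z) z := by
    filter_upwards [Ioo_mem_nhdsLT zero_lt_one] with t ht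
    rw [poissonKernel_ofReal_mul_self hz, one_le_div (by linarith [ht.2])]
    linarith [ht.1]
  have := ge_of_tendsto (tendsto_map'_iff.mp h) h_ge
  norm_num at this

theorem linearIndependent_poissonKernel {ι : Type*} {ζ : ι → ℂ} (h_inj : Function.Injective ζ)
    (h_norm : ∀ i, ‖ζ i‖ = 1) : LinearIndependent ℝ fun i w => poissonKernel 0 w (ζ i) := by
  have hζ : ∀ i, ζ i ≠ 0 := fun i h => by simpa [h] using h_norm i
  refine linearIndependent_of_tendsto_zero (fun i => map (fun t : ℝ => (t : ℂ) * ζ i) (𝓝[<] 1))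
    (fun i j hji => ?_) (fun i => not_tendsto_poissonKernel_radial (hζ i))
  have h_radial : Tendsto (fun t : ℝ => (t : ℂ) * ζ i) (𝓝[<] 1) (𝓝 (ζ i)) :=
    ((by fun_prop : Continuous fun t : ℝ => (t : ℂ) * ζ i).tendsto' 1 _ (by simp)).mono_left
      nhdsWithin_le_nhds
  exact (tendsto_poissonKernel_of_norm_eq (by simp [h_norm]) (h_inj.ne hji.symm)).comp h_radial

lemma exists_injective_norm_eq_one (n : ℕ) :
    ∃ ζ : Fin n → ℂ, Function.Injective ζ ∧ ∀ i, ‖ζ i‖ = 1 := by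
  rcases Nat.eq_zero_or_pos n with rfl | hn
  · exact ⟨fun _ => 1, Function.injective_of_subsingleton _, by simp⟩
  have hω := isPrimitiveRoot_exp n hn.ne'
  exact ⟨fun i => exp (2 * Real.pi * I / n) ^ (i : ℕ),
    fun i j h => Fin.ext (hω.pow_inj i.2 j.2 h),
    fun i => by rw [norm_pow, hω.norm'_eq_one hn.ne', one_pow]⟩

/-- The space of harmonic functions on the unit disk having nontangential
limit `0` at every boundary point outside a set of logarithmic capacity zero is
infinite-dimensional: it contains linearly independent families of arbitrary
finite cardinality. -/
theorem harmonic_null_NT_space_infinite_dim :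
    ∀ n : ℕ, ∃ f : Fin n → (ℂ → ℝ), LinearIndependent ℝ f ∧
      ∀ i : Fin n, IsHarmonicOn (f i) (Metric.ball 0 1) ∧
        ∃ N : Set ℂ, N ⊆ Metric.sphere (0 : ℂ) 1 ∧ capC N = 0 ∧
          ∀ ζ ∈ Metric.sphere (0 : ℂ) 1, ζ ∉ N → ∀ M > (1 : ℝ),
            Filter.Tendsto (f i) (nhdsWithin ζ (stolzAt ζ M)) (nhds 0) := by
  intro n
  obtain ⟨ζ, h_inj, h_norm⟩ := exists_injective_norm_eq_one n
  refine ⟨fun i w => poissonKernel 0 w (ζ i), linearIndependent_poissonKernel h_inj h_norm,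
    fun i => ?_⟩
  have h_ball : Metric.ball (0 : ℂ) 1 ⊆ {ζ i}ᶜ := fun w hw (h : w = ζ i) => by
    simp [h, h_norm i] at hw
  refine ⟨(isHarmonicOn_poissonKernel 0 (ζ i)).mono h_ball, {ζ i}, by simp [h_norm i],
    capC_singleton _, fun ξ hξ hξN M _ => ?_⟩
  have h_ξ : ‖ξ - 0‖ = ‖ζ i - 0‖ := by simpa [h_norm i] using hξ
  exact (tendsto_poissonKernel_of_norm_eq h_ξ hξN).mono_left nhdsWithin_le_nhds
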